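/- For all integers n ≥ 0 and e1, e2 ≥ 0, the number of pairs (T1, T2) with T1 ⊆ [1,n], T2 ⊆ [1,n+1], |T1| = e1, |T2| = e2, such that for every k ∈ T2 one has (k ≤ n implies k ∈ T1) and (k ≥ 2 implies k−1 ∈ T1), equals C(e1+1, e2)·C(n−e2, n−e1) + δ_{e1,n}·δ_{e2,n+1}, where δ denotes the Kronecker delta. -/
import Mathlib


/-- Binomial coefficient `C(a,b)` for integers, with the convention that it is `0`
when `a < 0` or `b < 0` (and, as usual, when `b > a`), and `C(a,0) = 1` for `a ≥ 0`. -/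
def intChoose (a b : ℤ) : ℕ :=
  if 0 ≤ a ∧ 0 ≤ b then a.toNat.choose b.toNat else 0

lemma intChoose_ofNat (a b : ℕ) : intChoose a b = a.choose b := by
  simp [intChoose]

lemma intChoose_neg_left {a : ℤ} (b : ℤ) (h : a < 0) : intChoose a b = 0 := by
  simp only [intChoose, ite_eq_right_iff]; intro h'; omega

lemma intChoose_neg_right (a : ℤ) {b : ℤ} (h : b < 0) : intChoose a b = 0 := by
  simp only [intChoose, ite_eq_right_iff]; intro h'; omega

def SS (n e1 e2 : ℕ) : Finset (Finset ℕ × Finset ℕ) :=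
  ((Finset.Icc 1 n).powerset ×ˢ (Finset.Icc 1 (n + 1)).powerset).filter
    (fun T => T.1.card = e1 ∧ T.2.card = e2 ∧
      ∀ k ∈ T.2, (k ≤ n → k ∈ T.1) ∧ (2 ≤ k → k - 1 ∈ T.1))

def Rf (n e1 e2 : ℕ) : ℕ :=
  intChoose ((e1 : ℤ) + 1) e2 * intChoose ((n : ℤ) - e2) ((n : ℤ) - e1)
    + (if e1 = n ∧ e2 = n + 1 then 1 else 0)

lemma mem_SS {n e1 e2 : ℕ} {T : Finset ℕ × Finset ℕ} :
    T ∈ SS n e1 e2 ↔ T.1 ⊆ Finset.Icc 1 n ∧ T.2 ⊆ Finset.Icc 1 (n + 1) ∧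
      T.1.card = e1 ∧ T.2.card = e2 ∧
      ∀ k ∈ T.2, (k ≤ n → k ∈ T.1) ∧ (2 ≤ k → k - 1 ∈ T.1) := by
  simp only [SS, Finset.mem_filter, Finset.mem_product, Finset.mem_powerset, and_assoc]

lemma SS_empty_e1 {n e1 : ℕ} (e2 : ℕ) (h : n < e1) : SS n e1 e2 = ∅ := by
  rw [Finset.eq_empty_iff_forall_notMem]
  intro T hT
  rw [mem_SS] at hT
  have := Finset.card_le_card hT.1
  rw [hT.2.2.1, Nat.card_Icc] at this
  omega

lemma SS_empty_e2 {n e2 : ℕ} (e1 : ℕ) (h : n + 1 < e2) : SS n e1 e2 = ∅ := by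
  rw [Finset.eq_empty_iff_forall_notMem]
  intro T hT
  rw [mem_SS] at hT
  have := Finset.card_le_card hT.2.1
  rw [hT.2.2.2.1, Nat.card_Icc] at this
  omega

lemma Rf_zero_e1 {n e1 : ℕ} (e2 : ℕ) (h : n < e1) : Rf n e1 e2 = 0 := by
  rw [Rf, intChoose_neg_right _ (by omega : (n : ℤ) - e1 < 0), if_neg (by omega)]
  ring

lemma Rf_zero_e2 {n e2 : ℕ} (e1 : ℕ) (h : n + 1 < e2) : Rf n e1 e2 = 0 := by
  rcases le_or_gt e1 n with h1 | h1
  · rw [Rf, show ((e1 : ℤ) + 1) = ((e1 + 1 : ℕ) : ℤ) by push_cast; ring, intChoose_ofNat,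
      Nat.choose_eq_zero_of_lt (by omega), if_neg (by omega)]
    ring
  · exact Rf_zero_e1 e2 h1

lemma SS_e2_zero (n e1 : ℕ) : (SS n e1 0).card = n.choose e1 := by
  have : (SS n e1 0).card = (Finset.powersetCard e1 (Finset.Icc 1 n)).card := by
    refine Finset.card_bij' (fun T _ => T.1) (fun S _ => (S, ∅)) ?_ ?_ ?_ ?_
    · intro T hT
      rw [mem_SS] at hT
      rw [Finset.mem_powersetCard]
      exact ⟨hT.1, hT.2.2.1⟩
    · intro S hS
      rw [Finset.mem_powersetCard] at hS
      rw [mem_SS]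
      exact ⟨hS.1, Finset.empty_subset _, hS.2, Finset.card_empty, by simp⟩
    · intro T hT
      rw [mem_SS] at hT
      have h2 : T.2 = ∅ := Finset.card_eq_zero.mp hT.2.2.2.1
      exact Prod.ext rfl h2.symm
    · intro S _
      rfl
  rw [this, Finset.card_powersetCard, Nat.card_Icc]
  norm_num

lemma base_e2 (n e1 : ℕ) : (SS n e1 0).card = Rf n e1 0 := by
  rw [SS_e2_zero, Rf, if_neg (by omega)]
  have h1 : intChoose ((e1 : ℤ) + 1) ((0 : ℕ) : ℤ) = 1 := by
    rw [show ((e1 : ℤ) + 1) = ((e1 + 1 : ℕ) : ℤ) by push_cast; ring,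
      show (((0 : ℕ) : ℤ)) = ((0 : ℕ) : ℤ) from rfl, intChoose_ofNat, Nat.choose_zero_right]
  rw [h1, one_mul]
  rcases le_or_gt e1 n with h | h
  · rw [show ((n : ℤ) - ((0:ℕ):ℤ)) = ((n : ℕ) : ℤ) by push_cast; ring,
      show ((n : ℤ) - (e1:ℤ)) = ((n - e1 : ℕ) : ℤ) by rw [Nat.cast_sub h],
      intChoose_ofNat, Nat.choose_symm h]
    ring
  · rw [intChoose_neg_right _ (by omega : (n : ℤ) - (e1:ℤ) < 0),
      Nat.choose_eq_zero_of_lt h]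

lemma SS_e1_zero_empty (n b : ℕ) : SS (n + 1) 0 (b + 1) = ∅ := by
  rw [Finset.eq_empty_iff_forall_notMem]
  intro T hT
  rw [mem_SS] at hT
  obtain ⟨s1, s2, c1, c2, hc⟩ := hT
  have h1 : T.1 = ∅ := Finset.card_eq_zero.mp c1
  have : T.2.Nonempty := Finset.card_pos.mp (by omega)
  obtain ⟨k, hk⟩ := this
  have hkIcc := s2 hk
  rw [Finset.mem_Icc] at hkIcc
  obtain ⟨hA, hB⟩ := hc k hk
  rcases le_or_gt k (n + 1) with h | h
  · have := hA h; rw [h1] at this; exact absurd this (Finset.notMem_empty _)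
  · have := hB (by omega); rw [h1] at this; exact absurd this (Finset.notMem_empty _)

lemma Rf_e1_zero (n b : ℕ) : Rf (n + 1) 0 (b + 1) = 0 := by
  rcases Nat.eq_zero_or_pos b with hb | hb
  · subst hb
    rw [Rf, if_neg (by omega),
      show ((n + 1 : ℕ) : ℤ) - ((1:ℕ):ℤ) = ((n : ℕ) : ℤ) by push_cast; ring,
      show ((n + 1 : ℕ) : ℤ) - ((0:ℕ):ℤ) = ((n + 1 : ℕ) : ℤ) by push_cast; ring,
      intChoose_ofNat, Nat.choose_eq_zero_of_lt (by omega)]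
    ring
  · rw [Rf, if_neg (by omega),
      show ((0 : ℕ) : ℤ) + 1 = ((1 : ℕ) : ℤ) by norm_num,
      intChoose_ofNat, Nat.choose_eq_zero_of_lt (by omega)]
    ring

lemma intChoose_pascal (a b : ℤ) (ha : 0 ≤ a) :
    intChoose (a + 1) (b + 1) = intChoose a b + intChoose a (b + 1) := by
  rcases lt_trichotomy b (-1) with hb | hb | hb
  · rw [intChoose, intChoose, intChoose, if_neg, if_neg, if_neg] <;> omega
  · subst hb
    rw [intChoose, intChoose, intChoose, if_pos ⟨by omega, by norm_num⟩,
      if_neg (by omega), if_pos ⟨ha, le_refl 0⟩]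
    norm_num
  · have hb0 : 0 ≤ b := by omega
    rw [intChoose, intChoose, intChoose, if_pos ⟨by omega, by omega⟩,
      if_pos ⟨ha, hb0⟩, if_pos ⟨ha, by omega⟩]
    have h1 : (a + 1).toNat = a.toNat + 1 := by omega
    have h2 : (b + 1).toNat = b.toNat + 1 := by omega
    rw [h1, h2, Nat.choose_succ_succ]

lemma intChoose_zero_left (c : ℤ) : intChoose 0 c = if c = 0 then 1 else 0 := by
  rcases lt_trichotomy c 0 with h | h | h
  · rw [intChoose, if_neg (by omega), if_neg (by omega)]
  · subst h; simp [intChoose]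
  · rw [intChoose, if_pos ⟨le_refl 0, by omega⟩, if_neg (by omega)]
    simp [Nat.choose_eq_zero_iff]; omega

-- the RHS recurrence
lemma rhs_rec (n a b : ℕ) :
    intChoose ((a:ℤ) + 2) ((b:ℤ) + 1) * intChoose ((n:ℤ) + 1 - b) ((n:ℤ) + 1 - a)
      + intChoose ((a:ℤ) + 1) b * intChoose ((n:ℤ) - b) ((n:ℤ) - a)
    = intChoose ((a:ℤ) + 1) b * intChoose ((n:ℤ) + 1 - b) ((n:ℤ) + 1 - a)
      + intChoose ((a:ℤ) + 1) ((b:ℤ) + 1) * intChoose ((n:ℤ) - b) ((n:ℤ) + 1 - a)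
      + intChoose ((a:ℤ) + 2) ((b:ℤ) + 1) * intChoose ((n:ℤ) - b) ((n:ℤ) - a)
      + (if a = n + 1 ∧ b = n + 1 then 1 else 0) := by
  have hP : intChoose ((a:ℤ) + 2) ((b:ℤ) + 1)
      = intChoose ((a:ℤ) + 1) b + intChoose ((a:ℤ) + 1) ((b:ℤ) + 1) := by
    rw [show (a:ℤ) + 2 = ((a:ℤ) + 1) + 1 by ring, intChoose_pascal _ _ (by positivity)]
  rcases le_or_gt (b : ℤ) (n : ℤ) with hbn | hbn
  · have hQ : intChoose ((n:ℤ) + 1 - b) ((n:ℤ) + 1 - a)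
        = intChoose ((n:ℤ) - b) ((n:ℤ) - a) + intChoose ((n:ℤ) - b) ((n:ℤ) - a + 1) := by
      rw [show (n:ℤ) + 1 - b = ((n:ℤ) - b) + 1 by ring,
        show (n:ℤ) + 1 - a = ((n:ℤ) - a) + 1 by ring,
        intChoose_pascal _ _ (by omega)]
    have hd : ¬ (a = n + 1 ∧ b = n + 1) := by omega
    rw [if_neg hd, hP, hQ, show (n:ℤ) + 1 - a = ((n:ℤ) - a) + 1 by ring]
    ring
  · -- b ≥ n + 1 : terms intChoose (n - b) · vanish
    have h0 : ((n:ℤ) - b) < 0 := by omega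
    rw [hP]
    simp only [intChoose_neg_left _ h0]
    rcases eq_or_lt_of_le (show (n:ℤ) + 1 ≤ b by omega) with hb | hb
    · have hbb : b = n + 1 := by omega
      subst hbb
      rw [show (n:ℤ) + 1 - (↑(n+1):ℤ) = 0 by push_cast; ring, intChoose_zero_left]
      rcases eq_or_ne a (n+1) with ha | ha
      · subst ha
        rw [if_pos (by omega), if_pos ⟨rfl, rfl⟩]
        push_cast
        have hY : intChoose ((n:ℤ) + 1 + 1) ((n:ℤ) + 1 + 1) = 1 := by
          rw [intChoose, if_pos ⟨by omega, by omega⟩,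
            show ((n:ℤ)+1+1).toNat = n+2 by omega, Nat.choose_self]
        rw [hY]
        ring
      · rw [if_neg (by omega), if_neg (by simp [ha])]
        ring
    · have h1 : ((n:ℤ) + 1 - b) < 0 := by omega
      simp only [intChoose_neg_left _ h1]
      rw [if_neg (by omega)]
      ring

lemma L1 (n a b : ℕ) :
    ((SS (n+2) (a+1) (b+1)).filter (fun T => n+2 ∈ T.1 ∧ n+3 ∈ T.2)).card
      = (SS (n+1) a b).card := by
  refine Finset.card_bij' (fun T _ => (T.1.erase (n+2), T.2.erase (n+3)))
    (fun T _ => (insert (n+2) T.1, insert (n+3) T.2)) ?_ ?_ ?_ ?_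
  · rintro ⟨T1, T2⟩ hT
    simp only [Finset.mem_filter] at hT
    obtain ⟨hT, h1, h2⟩ := hT
    rw [mem_SS] at hT
    obtain ⟨s1, s2, c1, c2, hc⟩ := hT
    rw [mem_SS]
    refine ⟨?_, ?_, ?_, ?_, ?_⟩
    · intro x hx
      have hxm := s1 (Finset.mem_of_mem_erase hx)
      have hne := Finset.ne_of_mem_erase hx
      rw [Finset.mem_Icc] at *
      omega
    · intro x hx
      have hxm := s2 (Finset.mem_of_mem_erase hx)
      have hne := Finset.ne_of_mem_erase hx
      rw [Finset.mem_Icc] at *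
      omega
    · rw [Finset.card_erase_of_mem h1, c1]
      omega
    · rw [Finset.card_erase_of_mem h2, c2]
      omega
    · intro k hk
      have hk2 := Finset.mem_of_mem_erase hk
      have hkne := Finset.ne_of_mem_erase hk
      have hkIcc := s2 hk2
      rw [Finset.mem_Icc] at hkIcc
      obtain ⟨hA, hB⟩ := hc k hk2
      constructor
      · intro hkn
        exact Finset.mem_erase.mpr ⟨by omega, hA (by omega)⟩
      · intro h2k
        exact Finset.mem_erase.mpr ⟨by omega, hB h2k⟩
  · rintro ⟨T1, T2⟩ hT
    rw [mem_SS] at hT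
    obtain ⟨s1, s2, c1, c2, hc⟩ := hT
    have hn1 : n+2 ∉ T1 := fun h => by have := s1 h; rw [Finset.mem_Icc] at this; omega
    have hn2 : n+3 ∉ T2 := fun h => by have := s2 h; rw [Finset.mem_Icc] at this; omega
    simp only [Finset.mem_filter]
    refine ⟨?_, Finset.mem_insert_self _ _, Finset.mem_insert_self _ _⟩
    rw [mem_SS]
    refine ⟨?_, ?_, ?_, ?_, ?_⟩
    · intro x hx
      rcases Finset.mem_insert.mp hx with h | h
      · rw [Finset.mem_Icc]; omega
      · have := s1 h; rw [Finset.mem_Icc] at *; omega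
    · intro x hx
      rcases Finset.mem_insert.mp hx with h | h
      · rw [Finset.mem_Icc]; omega
      · have := s2 h; rw [Finset.mem_Icc] at *; omega
    · rw [Finset.card_insert_of_notMem hn1, c1]
    · rw [Finset.card_insert_of_notMem hn2, c2]
    · intro k hk
      rcases Finset.mem_insert.mp hk with h | h
      · subst h
        constructor
        · intro h'; omega
        · intro _
          have : n+3-1 = n+2 := by omega
          rw [this]
          exact Finset.mem_insert_self _ _
      · have hkIcc := s2 h
        rw [Finset.mem_Icc] at hkIcc
        obtain ⟨hA, hB⟩ := hc k h
        constructor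
        · intro hkn
          rcases Nat.lt_or_ge k (n+2) with hlt | hge
          · exact Finset.mem_insert_of_mem (hA (by omega))
          · have : k = n+2 := by omega
            rw [this]; exact Finset.mem_insert_self _ _
        · intro h2k
          exact Finset.mem_insert_of_mem (hB h2k)
  · rintro ⟨T1, T2⟩ hT
    simp only [Finset.mem_filter] at hT
    obtain ⟨_, h1, h2⟩ := hT
    simp only [Finset.insert_erase h1, Finset.insert_erase h2]
  · rintro ⟨T1, T2⟩ hT
    rw [mem_SS] at hT
    obtain ⟨s1, s2, _, _, _⟩ := hT
    have hn1 : n+2 ∉ T1 := fun h => by have := s1 h; rw [Finset.mem_Icc] at this; omega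
    have hn2 : n+3 ∉ T2 := fun h => by have := s2 h; rw [Finset.mem_Icc] at this; omega
    simp only [Finset.erase_insert hn1, Finset.erase_insert hn2]

lemma L2 (n a b : ℕ) :
    ((SS (n+2) (a+1) (b+1)).filter (fun T => n+2 ∈ T.1 ∧ n+3 ∉ T.2)).card
      = (SS (n+1) a (b+1)).card := by
  refine Finset.card_bij' (fun T _ => (T.1.erase (n+2), T.2))
    (fun T _ => (insert (n+2) T.1, T.2)) ?_ ?_ ?_ ?_
  · rintro ⟨T1, T2⟩ hT
    simp only [Finset.mem_filter] at hT
    obtain ⟨hT, h1, h2⟩ := hT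
    rw [mem_SS] at hT
    obtain ⟨s1, s2, c1, c2, hc⟩ := hT
    rw [mem_SS]
    refine ⟨?_, ?_, ?_, ?_, ?_⟩
    · intro x hx
      have hxm := s1 (Finset.mem_of_mem_erase hx)
      have hne := Finset.ne_of_mem_erase hx
      rw [Finset.mem_Icc] at *
      omega
    · intro x hx
      have hxm := s2 hx
      have hne : x ≠ n+3 := by rintro rfl; exact h2 hx
      rw [Finset.mem_Icc] at *
      omega
    · rw [Finset.card_erase_of_mem h1, c1]
      omega
    · exact c2
    · intro k hk
      have hkIcc := s2 hk
      have hkne : k ≠ n+3 := by rintro rfl; exact h2 hk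
      rw [Finset.mem_Icc] at hkIcc
      obtain ⟨hA, hB⟩ := hc k hk
      constructor
      · intro hkn
        exact Finset.mem_erase.mpr ⟨by omega, hA (by omega)⟩
      · intro h2k
        exact Finset.mem_erase.mpr ⟨by omega, hB h2k⟩
  · rintro ⟨T1, T2⟩ hT
    rw [mem_SS] at hT
    obtain ⟨s1, s2, c1, c2, hc⟩ := hT
    have hn1 : n+2 ∉ T1 := fun h => by have := s1 h; rw [Finset.mem_Icc] at this; omega
    have hn2 : n+3 ∉ T2 := fun h => by have := s2 h; rw [Finset.mem_Icc] at this; omega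
    simp only [Finset.mem_filter]
    refine ⟨?_, Finset.mem_insert_self _ _, hn2⟩
    rw [mem_SS]
    refine ⟨?_, ?_, ?_, ?_, ?_⟩
    · intro x hx
      rcases Finset.mem_insert.mp hx with h | h
      · rw [Finset.mem_Icc]; omega
      · have := s1 h; rw [Finset.mem_Icc] at *; omega
    · intro x hx
      have := s2 hx; rw [Finset.mem_Icc] at *; omega
    · rw [Finset.card_insert_of_notMem hn1, c1]
    · exact c2
    · intro k hk
      have hkIcc := s2 hk
      rw [Finset.mem_Icc] at hkIcc
      obtain ⟨hA, hB⟩ := hc k hk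
      constructor
      · intro hkn
        rcases Nat.lt_or_ge k (n+2) with hlt | hge
        · exact Finset.mem_insert_of_mem (hA (by omega))
        · have : k = n+2 := by omega
          rw [this]; exact Finset.mem_insert_self _ _
      · intro h2k
        exact Finset.mem_insert_of_mem (hB h2k)
  · rintro ⟨T1, T2⟩ hT
    simp only [Finset.mem_filter] at hT
    obtain ⟨_, h1, _⟩ := hT
    simp only [Finset.insert_erase h1]
  · rintro ⟨T1, T2⟩ hT
    rw [mem_SS] at hT
    obtain ⟨s1, _, _, _, _⟩ := hT
    have hn1 : n+2 ∉ T1 := fun h => by have := s1 h; rw [Finset.mem_Icc] at this; omega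
    simp only [Finset.erase_insert hn1]

lemma L3 (n a b : ℕ) :
    (SS (n+2) (a+1) (b+1)).filter (fun T => n+2 ∉ T.1)
      = (SS (n+1) (a+1) (b+1)).filter (fun T => n+2 ∉ T.2) := by
  ext ⟨T1, T2⟩
  simp only [Finset.mem_filter, mem_SS]
  constructor
  · rintro ⟨⟨s1, s2, c1, c2, hc⟩, hP⟩
    have hn2 : n+2 ∉ T2 := fun h => hP ((hc _ h).1 (by omega))
    have hn3 : n+3 ∉ T2 := fun h => by
      have h' := (hc _ h).2 (by omega)
      rw [show n+3-1 = n+2 by omega] at h'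
      exact hP h'
    refine ⟨⟨?_, ?_, c1, c2, ?_⟩, hn2⟩
    · intro x hx
      have := s1 hx
      have hne : x ≠ n+2 := by rintro rfl; exact hP hx
      rw [Finset.mem_Icc] at *; omega
    · intro x hx
      have := s2 hx
      have hne : x ≠ n+3 := by rintro rfl; exact hn3 hx
      rw [Finset.mem_Icc] at *; omega
    · intro k hk
      obtain ⟨hA, hB⟩ := hc k hk
      exact ⟨fun h => hA (by omega), hB⟩
  · rintro ⟨⟨s1, s2, c1, c2, hc⟩, hQ⟩
    have hP : n+2 ∉ T1 := fun h => by have := s1 h; rw [Finset.mem_Icc] at this; omega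
    refine ⟨⟨?_, ?_, c1, c2, ?_⟩, hP⟩
    · intro x hx
      have := s1 hx; rw [Finset.mem_Icc] at *; omega
    · intro x hx
      have := s2 hx; rw [Finset.mem_Icc] at *; omega
    · intro k hk
      obtain ⟨hA, hB⟩ := hc k hk
      have hkIcc := s2 hk
      have hne : k ≠ n+2 := by rintro rfl; exact hQ hk
      rw [Finset.mem_Icc] at hkIcc
      exact ⟨fun h => hA (by omega), hB⟩

lemma L4 (n a b : ℕ) :
    ((SS (n+1) (a+1) (b+1)).filter (fun T => n+2 ∈ T.2)).card = (SS n a b).card := by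
  refine Finset.card_bij' (fun T _ => (T.1.erase (n+1), T.2.erase (n+2)))
    (fun T _ => (insert (n+1) T.1, insert (n+2) T.2)) ?_ ?_ ?_ ?_
  · rintro ⟨T1, T2⟩ hT
    simp only [Finset.mem_filter] at hT
    obtain ⟨hT, h2⟩ := hT
    rw [mem_SS] at hT
    obtain ⟨s1, s2, c1, c2, hc⟩ := hT
    have h1 : n+1 ∈ T1 := by
      have := (hc _ h2).2 (by omega)
      rwa [show n+2-1 = n+1 by omega] at this
    rw [mem_SS]
    refine ⟨?_, ?_, ?_, ?_, ?_⟩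
    · intro x hx
      have hxm := s1 (Finset.mem_of_mem_erase hx)
      have hne := Finset.ne_of_mem_erase hx
      rw [Finset.mem_Icc] at *
      omega
    · intro x hx
      have hxm := s2 (Finset.mem_of_mem_erase hx)
      have hne := Finset.ne_of_mem_erase hx
      rw [Finset.mem_Icc] at *
      omega
    · rw [Finset.card_erase_of_mem h1, c1]
      omega
    · rw [Finset.card_erase_of_mem h2, c2]
      omega
    · intro k hk
      have hk2 := Finset.mem_of_mem_erase hk
      have hkne := Finset.ne_of_mem_erase hk
      have hkIcc := s2 hk2
      rw [Finset.mem_Icc] at hkIcc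
      obtain ⟨hA, hB⟩ := hc k hk2
      constructor
      · intro hkn
        exact Finset.mem_erase.mpr ⟨by omega, hA (by omega)⟩
      · intro h2k
        exact Finset.mem_erase.mpr ⟨by omega, hB h2k⟩
  · rintro ⟨T1, T2⟩ hT
    rw [mem_SS] at hT
    obtain ⟨s1, s2, c1, c2, hc⟩ := hT
    have hn1 : n+1 ∉ T1 := fun h => by have := s1 h; rw [Finset.mem_Icc] at this; omega
    have hn2 : n+2 ∉ T2 := fun h => by have := s2 h; rw [Finset.mem_Icc] at this; omega
    simp only [Finset.mem_filter]
    refine ⟨?_, Finset.mem_insert_self _ _⟩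
    rw [mem_SS]
    refine ⟨?_, ?_, ?_, ?_, ?_⟩
    · intro x hx
      rcases Finset.mem_insert.mp hx with h | h
      · rw [Finset.mem_Icc]; omega
      · have := s1 h; rw [Finset.mem_Icc] at *; omega
    · intro x hx
      rcases Finset.mem_insert.mp hx with h | h
      · rw [Finset.mem_Icc]; omega
      · have := s2 h; rw [Finset.mem_Icc] at *; omega
    · rw [Finset.card_insert_of_notMem hn1, c1]
    · rw [Finset.card_insert_of_notMem hn2, c2]
    · intro k hk
      rcases Finset.mem_insert.mp hk with h | h
      · subst h
        constructor
        · intro h'; omega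
        · intro _
          rw [show n+2-1 = n+1 by omega]
          exact Finset.mem_insert_self _ _
      · have hkIcc := s2 h
        rw [Finset.mem_Icc] at hkIcc
        obtain ⟨hA, hB⟩ := hc k h
        constructor
        · intro hkn
          rcases Nat.lt_or_ge k (n+1) with hlt | hge
          · exact Finset.mem_insert_of_mem (hA (by omega))
          · have : k = n+1 := by omega
            rw [this]; exact Finset.mem_insert_self _ _
        · intro h2k
          exact Finset.mem_insert_of_mem (hB h2k)
  · rintro ⟨T1, T2⟩ hT
    simp only [Finset.mem_filter] at hT
    obtain ⟨hT, h2⟩ := hT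
    rw [mem_SS] at hT
    obtain ⟨s1, s2, c1, c2, hc⟩ := hT
    have h1 : n+1 ∈ T1 := by
      have := (hc _ h2).2 (by omega)
      rwa [show n+2-1 = n+1 by omega] at this
    simp only [Finset.insert_erase h1, Finset.insert_erase h2]
  · rintro ⟨T1, T2⟩ hT
    rw [mem_SS] at hT
    obtain ⟨s1, s2, _, _, _⟩ := hT
    have hn1 : n+1 ∉ T1 := fun h => by have := s1 h; rw [Finset.mem_Icc] at this; omega
    have hn2 : n+2 ∉ T2 := fun h => by have := s2 h; rw [Finset.mem_Icc] at this; omega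
    simp only [Finset.erase_insert hn1, Finset.erase_insert hn2]

lemma SS_rec (n a b : ℕ) :
    (SS (n+2) (a+1) (b+1)).card + (SS n a b).card
      = (SS (n+1) a b).card + (SS (n+1) a (b+1)).card + (SS (n+1) (a+1) (b+1)).card := by
  have key1 := Finset.card_filter_add_card_filter_not
    (s := SS (n+2) (a+1) (b+1)) (p := fun T => n+2 ∈ T.1)
  have key2 := Finset.card_filter_add_card_filter_not
    (s := (SS (n+2) (a+1) (b+1)).filter (fun T => n+2 ∈ T.1)) (p := fun T => n+3 ∈ T.2)
  have key3 := Finset.card_filter_add_card_filter_not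
    (s := SS (n+1) (a+1) (b+1)) (p := fun T => n+2 ∈ T.2)
  rw [Finset.filter_filter, Finset.filter_filter] at key2
  rw [L1, L2] at key2
  rw [L3] at key1
  rw [L4] at key3
  omega

lemma Rf_rec (n a b : ℕ) :
    Rf (n+2) (a+1) (b+1) + Rf n a b
      = Rf (n+1) a b + Rf (n+1) a (b+1) + Rf (n+1) (a+1) (b+1) := by
  have H := rhs_rec n a b
  simp only [Rf]
  push_cast
  ring_nf
  ring_nf at H
  linarith [H]

lemma main_f : ∀ n e1 e2 : ℕ, (SS n e1 e2).card = Rf n e1 e2 := by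
  intro n
  induction n using Nat.strong_induction_on with
  | _ n ih =>
    match n with
    | 0 =>
      intro e1 e2
      rcases Nat.lt_or_ge 0 e1 with h | h
      · rw [SS_empty_e1 e2 h, Rf_zero_e1 e2 h, Finset.card_empty]
      · have he1 : e1 = 0 := by omega
        subst he1
        rcases Nat.lt_or_ge 1 e2 with h2 | h2
        · rw [SS_empty_e2 0 h2, Rf_zero_e2 0 h2, Finset.card_empty]
        · interval_cases e2
          · decide
          · decide
    | 1 =>
      intro e1 e2
      rcases Nat.lt_or_ge 1 e1 with h | h
      · rw [SS_empty_e1 e2 h, Rf_zero_e1 e2 h, Finset.card_empty]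
      · rcases Nat.lt_or_ge 2 e2 with h2 | h2
        · rw [SS_empty_e2 e1 h2, Rf_zero_e2 e1 h2, Finset.card_empty]
        · interval_cases e1 <;> interval_cases e2 <;> decide
    | (m + 2) =>
      intro e1 e2
      match e2, e1 with
      | 0, e1 => exact base_e2 (m+2) e1
      | (b+1), 0 =>
        rw [show m + 2 = (m + 1) + 1 from rfl, SS_e1_zero_empty (m+1) b,
          Rf_e1_zero (m+1) b, Finset.card_empty]
      | (b+1), (a+1) =>
        have h := SS_rec m a b
        rw [ih (m+1) (by omega) a b, ih (m+1) (by omega) a (b+1),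
          ih (m+1) (by omega) (a+1) (b+1), ih m (by omega) a b] at h
        have hR := Rf_rec m a b
        omega

/-- The number of pairs `(T1, T2)` with `T1 ⊆ [1,n]`, `T2 ⊆ [1,n+1]`, `|T1| = e1`,
`|T2| = e2`, such that for every `k ∈ T2` one has `(k ≤ n → k ∈ T1)` and
`(k ≥ 2 → k−1 ∈ T1)`, equals `C(e1+1, e2) · C(n−e2, n−e1) + δ_{e1,n}·δ_{e2,n+1}`. -/
theorem card_coordinate_subreps_preinjective_kronecker (n e1 e2 : ℕ) :
    (((Finset.Icc 1 n).powerset ×ˢ (Finset.Icc 1 (n + 1)).powerset).filter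
        (fun T => T.1.card = e1 ∧ T.2.card = e2 ∧
          ∀ k ∈ T.2, (k ≤ n → k ∈ T.1) ∧ (2 ≤ k → k - 1 ∈ T.1))).card
      = intChoose ((e1 : ℤ) + 1) e2 * intChoose ((n : ℤ) - e2) ((n : ℤ) - e1)
        + (if e1 = n ∧ e2 = n + 1 then 1 else 0) := by
  exact main_f n e1 e2
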